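/- Let φ be a strictly convex N-function, w a weight on I, and f = Σ_{i=1}^n a_i·χ_{A_i} with a_1 > a_2 > … > a_n > 0, A_i = [t_{i−1}, t_i), 0 = t_0 < t_1 < … < t_n < ∞, t_n ∈ I. If g = Σ_{i=1}^n b_i·χ_{A_i} with b_1 ≥ b_2 ≥ … ≥ b_n > 0 realizes the infimum in the definition of P_{φ,w}(f) (i.e. g ≺ w and ∫_I φ(f/g)·g = P_{φ,w}(f)), then there exist m ≤ n, indices 0 = i_0 < i_1 < … < i_m = n and reals λ_0, …, λ_{m−1} > 0 such that g = Σ_{j=0}^{m−1} λ_j·f·χ_{[t_{i_j}, t_{i_{j+1}})} and G(t_{i_j}) = W(t_{i_j}) for each j = 0, 1, …, m, where G(t) = ∫₀ᵗ g. -/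

import Mathlib

open MeasureTheory Set Filter
open scoped ENNReal

noncomputable section

/-- The decreasing rearrangement of `f` with respect to Lebesgue measure on `I`. -/
def decRearr (I : Set ℝ) (f : ℝ → ℝ) (t : ℝ) : ℝ :=
  sInf {l : ℝ | 0 < l ∧ volume {s | s ∈ I ∧ l < |f s|} ≤ ENNReal.ofReal t}

/-- `φ(a/b)·b` with the convention `φ(c/0)·0 = 0` if `c = 0` and `= ∞` if `c ≠ 0`. -/
def phiRatio (φ : ℝ → ℝ) (a b : ℝ) : ℝ≥0∞ :=
  if b = 0 then (if a = 0 then 0 else ⊤) else ENNReal.ofReal (φ (a / b) * b)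

/-- Submajorization `g ≺ w` on `I` : `∫₀ᵗ g* ≤ ∫₀ᵗ w` for all `t ∈ I`. -/
def Submaj (I : Set ℝ) (w g : ℝ → ℝ) : Prop :=
  ∀ t ∈ I, ∫⁻ s in Ioo (0:ℝ) t, ENNReal.ofReal (decRearr I g s)
      ≤ ∫⁻ s in Ioo (0:ℝ) t, ENNReal.ofReal (w s)

/-- The modular `P_{φ,w}(f) = inf { ∫_I φ(f*/|g|)|g| : g ≺ w }`. -/
def Pmod (I : Set ℝ) (φ w f : ℝ → ℝ) : ℝ≥0∞ :=
  sInf { v : ℝ≥0∞ | ∃ g : ℝ → ℝ, Measurable g ∧ Submaj I w g ∧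
      v = ∫⁻ t in I, phiRatio φ (decRearr I f t) |g t| }

/-- The modular `I_{φ,w}(f) = ∫_I φ(f*) w`. -/
def Imod (I : Set ℝ) (φ w f : ℝ → ℝ) : ℝ≥0∞ :=
  ∫⁻ t in I, ENNReal.ofReal (φ (decRearr I f t) * w t)

/-- The Marcinkiewicz norm `‖g‖_{M_W} = sup_{t ∈ I, t > 0} (∫₀ᵗ g*)/W(t)`. -/
def MWnorm (I : Set ℝ) (w g : ℝ → ℝ) : ℝ≥0∞ :=
  ⨆ t ∈ I ∩ Ioi (0:ℝ),
    (∫⁻ s in Ioo (0:ℝ) t, ENNReal.ofReal (decRearr I g s)) /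
      ENNReal.ofReal (∫ s in Ioo (0:ℝ) t, w s)

/-- An Orlicz function: `φ(0) = 0`, `φ` convex, strictly increasing, `[0,∞) → [0,∞)`. -/
def OrliczOn (φ : ℝ → ℝ) : Prop :=
  φ 0 = 0 ∧ ConvexOn ℝ (Ici 0) φ ∧ StrictMonoOn φ (Ici 0) ∧ ∀ t, 0 ≤ t → 0 ≤ φ t

/-- An N-function: an Orlicz function with `φ(t)/t → 0` at `0⁺` and `φ(t)/t → ∞` at `∞`. -/
def NFun (φ : ℝ → ℝ) : Prop :=
  OrliczOn φ ∧ Tendsto (fun t => φ t / t) (nhdsWithin 0 (Ioi 0)) (nhds 0) ∧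
    Tendsto (fun t => φ t / t) atTop atTop

/-- The complementary function `φ*(s) = sup_{t ≥ 0} (st - φ(t))`. -/
def phiStar (φ : ℝ → ℝ) (s : ℝ) : ℝ := sSup ((fun t => s * t - φ t) '' Ici 0)

/-- The (generalized) inverse of an Orlicz function. -/
def phiInv (φ : ℝ → ℝ) (s : ℝ) : ℝ := sInf {t : ℝ | 0 ≤ t ∧ s ≤ φ t}

/-- The Calderón–Lozanovskii function `ρ_φ(t,s) = φ⁻¹(s/t)·t`. -/
def rhoFun (φ : ℝ → ℝ) (t s : ℝ) : ℝ := phiInv φ (s / t) * t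

/-- A weight on `I`: positive, decreasing and locally integrable. -/
def IsWeight (I : Set ℝ) (w : ℝ → ℝ) : Prop :=
  (∀ t ∈ I, 0 < w t) ∧ AntitoneOn w I ∧ ∀ t ∈ I, IntegrableOn w (Ioo 0 t)

/-- `I = [0,α)` with `0 < α ≤ ∞`. -/
def OLDomain (I : Set ℝ) : Prop := I = Ici 0 ∨ ∃ α : ℝ, 0 < α ∧ I = Ico 0 α

/-- The step function `Σ aᵢ χ_{[tᵢ₋₁,tᵢ)}`. -/
def stepFun (n : ℕ) (tt : Fin (n+1) → ℝ) (a : Fin n → ℝ) (s : ℝ) : ℝ :=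
  ∑ i : Fin n, if tt i.castSucc ≤ s ∧ s < tt i.succ then a i else 0

/-- `R(a,b) = F(a,b)/W(a,b)` where `F(a,b) = ∫_a^b f`, `W(a,b) = ∫_a^b w`. -/
def Rquot (w f : ℝ → ℝ) (a b : ℝ) : ℝ :=
  (∫ s in Ioo a b, f s) / (∫ s in Ioo a b, w s)

/-- `(a,b)` is a level interval of `f` with respect to `w`. -/
def IsLI (I : Set ℝ) (w f : ℝ → ℝ) (a b : ℝ) : Prop :=
  0 ≤ a ∧ a < b ∧ Ioo a b ⊆ I ∧ 0 < Rquot w f a b ∧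
    ∀ t ∈ Ioo a b, Rquot w f a t ≤ Rquot w f a b

/-- `(a,b)` is a maximal level interval of `f` with respect to `w`. -/
def IsMLI (I : Set ℝ) (w f : ℝ → ℝ) (a b : ℝ) : Prop :=
  IsLI I w f a b ∧ ∀ a' b', IsLI I w f a' b' → Ioo a b ⊆ Ioo a' b' → a = a' ∧ b = b'

/-- `f0` is a level function of `f` with respect to `w`. -/
def IsLevelFun (I : Set ℝ) (w f f0 : ℝ → ℝ) : Prop :=
  (∀ a b, IsMLI I w f a b → ∀ t ∈ Ioo a b, f0 t = Rquot w f a b * w t) ∧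
  (∀ t ∈ I, (∀ a b, IsMLI I w f a b → t ∉ Ioo a b) → f0 t = f t)

/-- The Köthe dual norm of the Orlicz–Lorentz space `Λ_{φ,w}` with the Luxemburg norm. -/
def KDnorm (I : Set ℝ) (φ w f : ℝ → ℝ) : ℝ≥0∞ :=
  sSup { v : ℝ≥0∞ | ∃ g : ℝ → ℝ, Measurable g ∧
      ({ε : ℝ | 0 < ε ∧ Imod I φ w (fun t => g t / ε) ≤ 1}).Nonempty ∧
      sInf {ε : ℝ | 0 < ε ∧ Imod I φ w (fun t => g t / ε) ≤ 1} ≤ 1 ∧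
      IntegrableOn (fun t => f t * g t) I ∧
      v = ENNReal.ofReal (∫ t in I, f t * g t) }

/-!
The constraint `g ≺ w` only has to be checked at the nodes `tᵢ`: between two nodes
`G(t) = ∫₀ᵗ g` is affine while `W` is concave. So the admissible decreasing step functions
are the antitone positive `c` with `G_c(tₖ) ≤ W(tₖ)` for all `k`, and on them the modular is the
convex function `Φ(c) = Σ φ(aᵢ/cᵢ) cᵢ |Aᵢ|`. Minimality of `b` then gives `Φ(b) ≤ Φ(c)` for
every `c` such that `b + θ(c - b)` stays admissible for small `θ > 0`.

Two such competitors give the theorem. Raising the last level of `b` lowers `Φ`, because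
`x ↦ φ(A/x) x` is strictly decreasing; so the last node is tight, `G(tₙ) = W(tₙ)`. Between two
consecutive tight nodes, replacing `b` by the multiple of `a` with the same mass lowers `Φ` by
strict Jensen unless `b/a` is constant there. Both directions are admissible since slack nodes
allow small moves and, by concavity of `W - G` where `b` is flat, a tight node never lies inside
a level set of `b` that also contains a slack node.
-/

theorem setIntegral_Ioo_add {f : ℝ → ℝ} {a b c : ℝ} (hf : IntegrableOn f (Ioo a c))
    (hab : a ≤ b) (hbc : b ≤ c) :
    ∫ s in Ioo a c, f s = (∫ s in Ioo a b, f s) + ∫ s in Ioo b c, f s := by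
  have hf' : IntervalIntegrable f volume a c :=
    (intervalIntegrable_iff_integrableOn_Ioo_of_le (hab.trans hbc)).2 hf
  simp only [← integral_Ioc_eq_integral_Ioo, ← intervalIntegral.integral_of_le hab,
    ← intervalIntegral.integral_of_le hbc, ← intervalIntegral.integral_of_le (hab.trans hbc)]
  exact (intervalIntegral.integral_add_adjacent_intervals
    (hf'.mono_set (uIcc_subset_uIcc_left (by simp [hab, hbc, hab.trans hbc])))
    (hf'.mono_set (uIcc_subset_uIcc_right (by simp [hab, hbc, hab.trans hbc])))).symm

namespace OLDomain

variable {I : Set ℝ}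

theorem nonneg_of_mem (hI : OLDomain I) {x : ℝ} (hx : x ∈ I) : 0 ≤ x := by
  rcases hI with rfl | ⟨α, -, rfl⟩
  exacts [hx, hx.1]

theorem mem_of_le (hI : OLDomain I) {x y : ℝ} (hx : 0 ≤ x) (hxy : x ≤ y) (hy : y ∈ I) :
    x ∈ I := by
  rcases hI with rfl | ⟨α, -, rfl⟩
  exacts [hx, ⟨hx, hxy.trans_lt hy.2⟩]

theorem measurableSet (hI : OLDomain I) : MeasurableSet I := by
  rcases hI with rfl | ⟨α, -, rfl⟩
  exacts [measurableSet_Ici, measurableSet_Ico]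

end OLDomain

namespace IsWeight

variable {I : Set ℝ} {w : ℝ → ℝ}

theorem integrableOn_Ioo (hw : IsWeight I w) {u v : ℝ} (hu : 0 ≤ u) (hv : v ∈ I) :
    IntegrableOn w (Ioo u v) :=
  (hw.2.2 v hv).mono_set fun _ hx => ⟨hu.trans_lt hx.1, hx.2⟩

theorem setIntegral_nonneg (hI : OLDomain I) (hw : IsWeight I w) {u v : ℝ} (hu : 0 ≤ u)
    (hv : v ∈ I) : 0 ≤ ∫ s in Ioo u v, w s :=
  MeasureTheory.setIntegral_nonneg measurableSet_Ioo fun x hx =>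
    (hw.1 x (hI.mem_of_le (hu.trans hx.1.le) hx.2.le hv)).le

theorem mul_sub_le_sub (hI : OLDomain I) (hw : IsWeight I w) {x y : ℝ} (hx : 0 ≤ x)
    (hxy : x ≤ y) (hy : y ∈ I) :
    w y * (y - x) ≤ (∫ s in Ioo 0 y, w s) - ∫ s in Ioo 0 x, w s := by
  rw [setIntegral_Ioo_add (hw.2.2 y hy) hx hxy, add_sub_cancel_left,
    ← Real.volume_real_Ioo_of_le hxy, mul_comm, ← smul_eq_mul, ← setIntegral_const]
  exact setIntegral_mono_on (integrableOn_const measure_Ioo_lt_top.ne)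
    (hw.integrableOn_Ioo hx hy) measurableSet_Ioo fun s hs =>
      hw.2.1 (hI.mem_of_le (hx.trans hs.1.le) hs.2.le hy) hy hs.2.le

theorem sub_le_mul_sub (hI : OLDomain I) (hw : IsWeight I w) {y z : ℝ} (hy : y ∈ I)
    (hyz : y ≤ z) (hz : z ∈ I) :
    (∫ s in Ioo 0 z, w s) - ∫ s in Ioo 0 y, w s ≤ w y * (z - y) := by
  have hy0 := hI.nonneg_of_mem hy
  rw [setIntegral_Ioo_add (hw.2.2 z hz) hy0 hyz, add_sub_cancel_left,
    ← Real.volume_real_Ioo_of_le hyz, mul_comm, ← smul_eq_mul, ← setIntegral_const]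
  exact setIntegral_mono_on (hw.integrableOn_Ioo hy0 hz)
    (integrableOn_const measure_Ioo_lt_top.ne) measurableSet_Ioo fun s hs =>
      hw.2.1 hy (hI.mem_of_le (hy0.trans hs.1.le) hs.2.le hz) hs.1.le

end IsWeight

namespace OrliczLorentz

open Topology

section StepFun

variable {n : ℕ} {tt : Fin (n+1) → ℝ}

theorem eq_of_mem_cell (htt : StrictMono tt) {i j : Fin n} {s : ℝ}
    (hi : tt i.castSucc ≤ s ∧ s < tt i.succ) (hj : tt j.castSucc ≤ s ∧ s < tt j.succ) :
    i = j := by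
  by_contra hij
  rcases lt_or_gt_of_ne hij with h | h <;> linarith [htt.monotone (Fin.succ_le_castSucc_iff.2 h)]

theorem exists_mem_cell (htt : StrictMono tt) {s : ℝ} (h0 : tt 0 ≤ s)
    (hlast : s < tt (Fin.last n)) : ∃ i : Fin n, tt i.castSucc ≤ s ∧ s < tt i.succ := by
  induction n with
  | zero => exact absurd (h0.trans_lt hlast) (lt_irrefl _)
  | succ n ih =>
    by_cases hs : s < tt (Fin.last n).castSucc
    · obtain ⟨i, hi⟩ := ih (htt.comp Fin.strictMono_castSucc) (by simpa using h0) hs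
      exact ⟨i.castSucc, by rw [Fin.succ_castSucc]; exact hi⟩
    · exact ⟨Fin.last n, le_of_not_gt hs, hlast⟩

theorem stepFun_apply (htt : StrictMono tt) (c : Fin n → ℝ) {i : Fin n} {s : ℝ}
    (h1 : tt i.castSucc ≤ s) (h2 : s < tt i.succ) : stepFun n tt c s = c i := by
  rw [stepFun, Finset.sum_eq_single i (fun j _ hj => if_neg fun hs => hj
    (eq_of_mem_cell htt hs ⟨h1, h2⟩)) (by simp), if_pos ⟨h1, h2⟩]

theorem stepFun_eq_zero_of_lt (htt : Monotone tt) (c : Fin n → ℝ) {s : ℝ} (hs : s < tt 0) :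
    stepFun n tt c s = 0 :=
  Finset.sum_eq_zero fun _ _ => if_neg fun h => (hs.trans_le (htt (Fin.zero_le _))).not_ge h.1

theorem stepFun_eq_zero_of_last_le (htt : Monotone tt) (c : Fin n → ℝ) {s : ℝ}
    (hs : tt (Fin.last n) ≤ s) : stepFun n tt c s = 0 :=
  Finset.sum_eq_zero fun _ _ => if_neg fun h => (h.2.trans_le (htt (Fin.le_last _))).not_ge hs

theorem stepFun_nonneg {c : Fin n → ℝ} (hc : ∀ i, 0 ≤ c i) (s : ℝ) :
    0 ≤ stepFun n tt c s :=
  Finset.sum_nonneg fun i _ => by split <;> simp [hc i]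

theorem stepFun_eq_sum_indicator (c : Fin n → ℝ) :
    stepFun n tt c =
      fun s => ∑ i, (Ico (tt i.castSucc) (tt i.succ)).indicator (fun _ => c i) s := by
  ext s
  simp [stepFun, Set.indicator_apply]

theorem integrable_stepFun (c : Fin n → ℝ) : Integrable (stepFun n tt c) := by
  rw [stepFun_eq_sum_indicator]
  exact integrable_finsetSum _ fun i _ =>
    (integrable_indicator_iff measurableSet_Ico).2 (integrableOn_const measure_Ico_lt_top.ne)

theorem measurable_stepFun (c : Fin n → ℝ) : Measurable (stepFun n tt c) := by
  rw [stepFun_eq_sum_indicator]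
  exact Finset.measurable_sum _ fun i _ => measurable_const.indicator measurableSet_Ico

end StepFun

section NodeMass

variable {n : ℕ} {tt : Fin (n+1) → ℝ}

def nodeMass (n : ℕ) (tt : Fin (n+1) → ℝ) (c : Fin n → ℝ) (k : Fin (n+1)) : ℝ :=
  ∑ i with i.castSucc < k, c i * (tt i.succ - tt i.castSucc)

theorem nodeMass_zero (c : Fin n → ℝ) : nodeMass n tt c 0 = 0 := by
  simp [nodeMass]

theorem nodeMass_succ (c : Fin n → ℝ) (k : Fin n) :
    nodeMass n tt c k.succ = nodeMass n tt c k.castSucc + c k * (tt k.succ - tt k.castSucc) := by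
  have hcells : Finset.univ.filter (fun i : Fin n => i.castSucc < k.succ)
      = insert k (Finset.univ.filter fun i : Fin n => i.castSucc < k.castSucc) := by
    ext i
    simp only [Finset.mem_insert, Finset.mem_filter, Finset.mem_univ, true_and,
      Fin.castSucc_lt_succ_iff, Fin.castSucc_lt_castSucc_iff, le_iff_eq_or_lt]
  rw [nodeMass, nodeMass, hcells, Finset.sum_insert (by simp), add_comm]

theorem nodeMass_last (c : Fin n → ℝ) :
    nodeMass n tt c (Fin.last n) = ∑ i, c i * (tt i.succ - tt i.castSucc) := by
  simp [nodeMass, Fin.castSucc_lt_last]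

theorem nodeMass_add_mul_sub (b c : Fin n → ℝ) (θ : ℝ) (k : Fin (n+1)) :
    nodeMass n tt (fun i => b i + θ * (c i - b i)) k
      = nodeMass n tt b k + θ * (nodeMass n tt c k - nodeMass n tt b k) := by
  simp only [nodeMass, Finset.mul_sum, ← Finset.sum_sub_distrib, ← Finset.sum_add_distrib]
  exact Finset.sum_congr rfl fun i _ => by ring

theorem nodeMass_of_flat {c : Fin n → ℝ} {β : ℝ} {k₁ k₂ : Fin (n+1)} (h : k₁ ≤ k₂)
    (hc : ∀ i : Fin n, k₁ ≤ i.castSucc → i.castSucc < k₂ → c i = β) :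
    nodeMass n tt c k₂ = nodeMass n tt c k₁ + β * (tt k₂ - tt k₁) := by
  induction k₂ using Fin.induction with
  | zero => simp [le_antisymm h (Fin.zero_le _)]
  | succ j ih =>
    rcases eq_or_lt_of_le h with rfl | hlt
    · simp
    have hj : k₁ ≤ j.castSucc := Fin.le_castSucc_iff.2 hlt
    rw [nodeMass_succ, ih hj fun i h₁ h₂ => hc i h₁ (h₂.trans Fin.castSucc_lt_succ),
      hc j hj Fin.castSucc_lt_succ]
    ring

theorem setIntegral_stepFun_of_mem_cell (htt : StrictMono tt) (c : Fin n → ℝ) {i : Fin n}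
    {u v : ℝ} (hu : tt i.castSucc ≤ u) (huv : u ≤ v) (hv : v ≤ tt i.succ) :
    ∫ s in Ioo u v, stepFun n tt c s = c i * (v - u) := by
  rw [setIntegral_congr_fun measurableSet_Ioo
    fun s hs => stepFun_apply htt c (hu.trans hs.1.le) (hs.2.trans_le hv),
    setIntegral_const, Real.volume_real_Ioo_of_le huv, smul_eq_mul, mul_comm]

theorem setIntegral_stepFun (htt0 : tt 0 = 0) (htt : StrictMono tt) (c : Fin n → ℝ)
    (k : Fin (n+1)) : ∫ s in Ioo 0 (tt k), stepFun n tt c s = nodeMass n tt c k := by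
  induction k using Fin.induction with
  | zero => simp [htt0, nodeMass_zero]
  | succ k ih =>
    have hk : tt k.castSucc ≤ tt k.succ := htt.monotone (Fin.castSucc_le_succ k)
    rw [setIntegral_Ioo_add (integrable_stepFun c).integrableOn
        (htt0 ▸ htt.monotone (Fin.zero_le _)) hk, ih,
      setIntegral_stepFun_of_mem_cell htt c le_rfl hk le_rfl, nodeMass_succ]

theorem integral_stepFun (htt0 : tt 0 = 0) (htt : StrictMono tt) (c : Fin n → ℝ) :
    ∫ s, stepFun n tt c s = nodeMass n tt c (Fin.last n) := by
  rw [← setIntegral_stepFun htt0 htt, ← integral_Ico_eq_integral_Ioo,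
    setIntegral_eq_integral_of_forall_compl_eq_zero fun s hs => ?_]
  rcases lt_or_ge s 0 with h | h
  · exact stepFun_eq_zero_of_lt htt.monotone c (htt0 ▸ h)
  · exact stepFun_eq_zero_of_last_le htt.monotone c (not_lt.1 fun h' => hs ⟨h, h'⟩)

end NodeMass

theorem decRearr_eq_of_forall {I : Set ℝ} {f : ℝ → ℝ} {s v : ℝ} (hv : 0 ≤ v)
    (hle : ∀ l, v < l → volume {x | x ∈ I ∧ l < |f x|} ≤ ENNReal.ofReal s)
    (hlt : ∀ l, 0 < l → l < v → ENNReal.ofReal s < volume {x | x ∈ I ∧ l < |f x|}) :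
    decRearr I f s = v := by
  refine csInf_eq_of_forall_ge_of_forall_gt_exists_lt
    ⟨v + 1, by linarith, hle _ (by linarith)⟩ (fun l ⟨hl, hvol⟩ => ?_) fun u hu =>
      ⟨(v + u) / 2, ⟨by linarith, hle _ (by linarith)⟩, by linarith⟩
  by_contra! h
  exact (hlt l hl h).not_ge hvol

section Rearrangement

variable {I : Set ℝ} {n : ℕ} {tt : Fin (n+1) → ℝ} {c : Fin n → ℝ}

theorem setOf_lt_abs_stepFun_subset (htt : StrictMono tt) (hc : ∀ i, 0 ≤ c i) {l : ℝ}
    (hl : 0 ≤ l) {K : Fin (n+1)} (hK : ∀ j, l < c j → j.succ ≤ K) :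
    {x | x ∈ I ∧ l < |stepFun n tt c x|} ⊆ Ico (tt 0) (tt K) := by
  rintro x ⟨-, hx⟩
  have h0 : tt 0 ≤ x := not_lt.1 fun h => by
    rw [stepFun_eq_zero_of_lt htt.monotone c h] at hx; simp at hx; linarith
  have hlast : x < tt (Fin.last n) := not_le.1 fun h => by
    rw [stepFun_eq_zero_of_last_le htt.monotone c h] at hx; simp at hx; linarith
  obtain ⟨j, hj₁, hj₂⟩ := exists_mem_cell htt h0 hlast
  rw [stepFun_apply htt c hj₁ hj₂, abs_of_nonneg (hc j)] at hx
  exact ⟨h0, hj₂.trans_le (htt.monotone (hK j hx))⟩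

theorem Ico_subset_setOf_lt_abs_stepFun (hI : OLDomain I) (htt0 : tt 0 = 0)
    (htt : StrictMono tt) (httI : tt (Fin.last n) ∈ I) (hc : Antitone c)
    (hcpos : ∀ i, 0 < c i) {l : ℝ} {i : Fin n} (hl : l < c i) :
    Ico (tt 0) (tt i.succ) ⊆ {x | x ∈ I ∧ l < |stepFun n tt c x|} := by
  rintro x ⟨h0, hx⟩
  have hlast : x < tt (Fin.last n) := hx.trans_le (htt.monotone (Fin.le_last _))
  obtain ⟨j, hj₁, hj₂⟩ := exists_mem_cell htt h0 hlast
  refine ⟨hI.mem_of_le (htt0 ▸ h0) hlast.le httI, ?_⟩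
  rw [stepFun_apply htt c hj₁ hj₂, abs_of_pos (hcpos j)]
  exact hl.trans_le (hc (Fin.castSucc_lt_succ_iff.1 (htt.lt_iff_lt.1 (hj₁.trans_lt hx))))

theorem decRearr_stepFun (hI : OLDomain I) (htt0 : tt 0 = 0) (htt : StrictMono tt)
    (httI : tt (Fin.last n) ∈ I) (hc : Antitone c) (hcpos : ∀ i, 0 < c i) {s : ℝ}
    (hs : s ∈ I) : decRearr I (stepFun n tt c) s = stepFun n tt c s := by
  have hc0 i := (hcpos i).le
  have hs0 := hI.nonneg_of_mem hs
  rcases lt_or_ge s (tt (Fin.last n)) with hlast | hlast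
  · obtain ⟨i, hi₁, hi₂⟩ := exists_mem_cell htt (htt0 ▸ hs0) hlast
    rw [stepFun_apply htt c hi₁ hi₂]
    refine decRearr_eq_of_forall (hc0 i) (fun l hl => ?_) fun l _ hl => ?_
    · have hK j (hj : l < c j) : j.succ ≤ i.castSucc :=
        Fin.succ_le_castSucc_iff.2 (lt_of_not_ge fun hij => (hl.trans hj).not_ge (hc hij))
      calc volume {x | x ∈ I ∧ l < |stepFun n tt c x|}
          ≤ volume (Ico (tt 0) (tt i.castSucc)) :=
            measure_mono (setOf_lt_abs_stepFun_subset htt hc0 ((hc0 i).trans hl.le) hK)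
        _ ≤ ENNReal.ofReal s := by rw [Real.volume_Ico, htt0, sub_zero]; gcongr
    · calc ENNReal.ofReal s < ENNReal.ofReal (tt i.succ - tt 0) := by
            rw [htt0, sub_zero]; exact (ENNReal.ofReal_lt_ofReal_iff_of_nonneg hs0).2 hi₂
        _ = volume (Ico (tt 0) (tt i.succ)) := Real.volume_Ico.symm
        _ ≤ volume {x | x ∈ I ∧ l < |stepFun n tt c x|} :=
            measure_mono (Ico_subset_setOf_lt_abs_stepFun hI htt0 htt httI hc hcpos hl)
  · rw [stepFun_eq_zero_of_last_le htt.monotone c hlast]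
    refine decRearr_eq_of_forall le_rfl (fun l hl => ?_) fun l hl hl' => absurd hl' hl.not_gt
    calc volume {x | x ∈ I ∧ l < |stepFun n tt c x|}
        ≤ volume (Ico (tt 0) (tt (Fin.last n))) :=
          measure_mono (setOf_lt_abs_stepFun_subset htt hc0 hl.le fun j _ => Fin.le_last _)
      _ ≤ ENNReal.ofReal s := by rw [Real.volume_Ico, htt0, sub_zero]; gcongr

end Rearrangement

section Submajorization

variable {I : Set ℝ} {w : ℝ → ℝ} {n : ℕ} {tt : Fin (n+1) → ℝ} {c : Fin n → ℝ}

theorem node_mem (hI : OLDomain I) (htt0 : tt 0 = 0) (htt : StrictMono tt)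
    (httI : tt (Fin.last n) ∈ I) (k : Fin (n+1)) : tt k ∈ I :=
  hI.mem_of_le (htt0 ▸ htt.monotone (Fin.zero_le k)) (htt.monotone (Fin.le_last k)) httI

def NodeSubmaj (n : ℕ) (tt : Fin (n+1) → ℝ) (w : ℝ → ℝ) (c : Fin n → ℝ) : Prop :=
  ∀ k, nodeMass n tt c k ≤ ∫ s in Ioo 0 (tt k), w s

theorem submaj_stepFun_iff (hI : OLDomain I) (hw : IsWeight I w) (htt0 : tt 0 = 0)
    (htt : StrictMono tt) (httI : tt (Fin.last n) ∈ I) (hc : Antitone c)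
    (hcpos : ∀ i, 0 < c i) :
    Submaj I w (stepFun n tt c) ↔
      ∀ t ∈ I, ∫ s in Ioo 0 t, stepFun n tt c s ≤ ∫ s in Ioo 0 t, w s := by
  have hlint {f : ℝ → ℝ} {t : ℝ} (hf : IntegrableOn f (Ioo 0 t))
      (hf0 : ∀ x ∈ Ioo 0 t, 0 ≤ f x) :
      ∫⁻ s in Ioo 0 t, ENNReal.ofReal (f s) = ENNReal.ofReal (∫ s in Ioo 0 t, f s) :=
    (ofReal_integral_eq_lintegral_ofReal hf
      ((ae_restrict_iff' measurableSet_Ioo).2 (Eventually.of_forall hf0))).symm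
  refine forall₂_congr fun t ht => ?_
  have hIoo : Ioo 0 t ⊆ I := fun x hx => hI.mem_of_le hx.1.le hx.2.le ht
  rw [setLIntegral_congr_fun measurableSet_Ioo fun s hs => congrArg ENNReal.ofReal
      (decRearr_stepFun hI htt0 htt httI hc hcpos (hIoo hs)),
    hlint (integrable_stepFun c).integrableOn fun x _ => stepFun_nonneg (fun i => (hcpos i).le) x,
    hlint (hw.2.2 t ht) fun x hx => (hw.1 x (hIoo hx)).le,
    ENNReal.ofReal_le_ofReal_iff (hw.setIntegral_nonneg hI le_rfl ht)]

theorem setIntegral_stepFun_le_of_nodeSubmaj (hI : OLDomain I) (hw : IsWeight I w)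
    (htt0 : tt 0 = 0) (htt : StrictMono tt) (httI : tt (Fin.last n) ∈ I)
    (hnode : NodeSubmaj n tt w c) {t : ℝ} (ht : t ∈ I) :
    ∫ s in Ioo 0 t, stepFun n tt c s ≤ ∫ s in Ioo 0 t, w s := by
  have ht0 := hI.nonneg_of_mem ht
  have htt_nonneg k : 0 ≤ tt k := htt0 ▸ htt.monotone (Fin.zero_le k)
  rcases lt_or_ge t (tt (Fin.last n)) with hlast | hlast
  · obtain ⟨k, hk₁, hk₂⟩ := exists_mem_cell htt (htt0 ▸ ht0) hlast
    set u := tt k.castSucc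
    set v := tt k.succ
    have hG : ∫ s in Ioo 0 t, stepFun n tt c s = nodeMass n tt c k.castSucc + c k * (t - u) := by
      rw [setIntegral_Ioo_add (integrable_stepFun c).integrableOn (htt_nonneg _) hk₁,
        setIntegral_stepFun htt0 htt, setIntegral_stepFun_of_mem_cell htt c le_rfl hk₁ hk₂.le]
    have hleft := hw.mul_sub_le_sub hI (htt_nonneg _) hk₁ ht
    have hright := hw.sub_le_mul_sub hI ht hk₂.le (node_mem hI htt0 htt httI k.succ)
    have hu := hnode k.castSucc
    have hv := hnode k.succ
    rw [nodeMass_succ] at hv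
    rw [hG]
    -- `∫₀ᵗ w` is concave with slope `w t` at `t`: use the left node if `c k ≤ w t`,
    -- with the right node otherwise
    rcases le_total (c k) (w t) with h | h
    · linarith [mul_le_mul_of_nonneg_right h (sub_nonneg.2 hk₁)]
    · have hsplit : c k * (t - u) = c k * (v - u) - c k * (v - t) := by ring
      linarith [mul_le_mul_of_nonneg_right h (sub_nonneg.2 hk₂.le)]
  · have h0n := htt_nonneg (Fin.last n)
    rw [setIntegral_Ioo_add (integrable_stepFun c).integrableOn h0n hlast,
      setIntegral_Ioo_add (hw.2.2 t ht) h0n hlast, setIntegral_stepFun htt0 htt,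
      setIntegral_congr_fun measurableSet_Ioo fun s hs =>
        stepFun_eq_zero_of_last_le htt.monotone c hs.1.le]
    simp only [integral_zero, add_zero]
    linarith [hnode (Fin.last n), hw.setIntegral_nonneg hI h0n ht]

theorem submaj_stepFun_iff_nodeSubmaj (hI : OLDomain I) (hw : IsWeight I w) (htt0 : tt 0 = 0)
    (htt : StrictMono tt) (httI : tt (Fin.last n) ∈ I) (hc : Antitone c)
    (hcpos : ∀ i, 0 < c i) : Submaj I w (stepFun n tt c) ↔ NodeSubmaj n tt w c :=
  (submaj_stepFun_iff hI hw htt0 htt httI hc hcpos).trans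
    ⟨fun h k => setIntegral_stepFun htt0 htt c k ▸ h _ (node_mem hI htt0 htt httI k),
      fun h _ ht => setIntegral_stepFun_le_of_nodeSubmaj hI hw htt0 htt httI h ht⟩

end Submajorization

section Modular

variable {I : Set ℝ} {φ w : ℝ → ℝ} {n : ℕ} {tt : Fin (n+1) → ℝ}

def stepModular (φ : ℝ → ℝ) (n : ℕ) (tt : Fin (n+1) → ℝ) (a c : Fin n → ℝ) : ℝ :=
  ∑ i, φ (a i / c i) * c i * (tt i.succ - tt i.castSucc)

theorem stepModular_nonneg (hφ : ∀ t, 0 ≤ t → 0 ≤ φ t) (htt : Monotone tt)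
    {a c : Fin n → ℝ} (ha : ∀ i, 0 ≤ a i) (hc : ∀ i, 0 < c i) :
    0 ≤ stepModular φ n tt a c :=
  Finset.sum_nonneg fun i _ => mul_nonneg (mul_nonneg (hφ _ (div_nonneg (ha i) (hc i).le))
    (hc i).le) (sub_nonneg.2 (htt (Fin.castSucc_le_succ i)))

theorem lintegral_phiRatio_stepFun (hI : OLDomain I) (hφ : ∀ t, 0 ≤ t → 0 ≤ φ t)
    (htt0 : tt 0 = 0) (htt : StrictMono tt) (httI : tt (Fin.last n) ∈ I) {a c : Fin n → ℝ}
    (ha : ∀ i, 0 ≤ a i) (hc : ∀ i, 0 < c i) :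
    ∫⁻ t in I, phiRatio φ (stepFun n tt a t) (stepFun n tt c t)
      = ENNReal.ofReal (stepModular φ n tt a c) := by
  set e : Fin n → ℝ := fun i => φ (a i / c i) * c i
  have he i : 0 ≤ e i := mul_nonneg (hφ _ (div_nonneg (ha i) (hc i).le)) (hc i).le
  have hpt : EqOn (fun t => phiRatio φ (stepFun n tt a t) (stepFun n tt c t))
      (fun t => ENNReal.ofReal (stepFun n tt e t)) I := by
    intro t ht
    rcases lt_or_ge t (tt (Fin.last n)) with hlast | hlast
    · obtain ⟨i, hi₁, hi₂⟩ := exists_mem_cell htt (htt0 ▸ hI.nonneg_of_mem ht) hlast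
      simp only [stepFun_apply htt _ hi₁ hi₂, phiRatio, if_neg (hc i).ne', e]
    · simp only [stepFun_eq_zero_of_last_le htt.monotone _ hlast, phiRatio, if_true,
        ENNReal.ofReal_zero]
  have hsupp (s : ℝ) (hs : s ∉ I) : stepFun n tt e s = 0 := by
    rcases lt_or_ge s 0 with h | h
    · exact stepFun_eq_zero_of_lt htt.monotone e (htt0 ▸ h)
    · exact stepFun_eq_zero_of_last_le htt.monotone e
        (not_lt.1 fun h' => hs (hI.mem_of_le h h'.le httI))
  rw [setLIntegral_congr_fun hI.measurableSet hpt, ← ofReal_integral_eq_lintegral_ofReal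
      (integrable_stepFun e).integrableOn (Eventually.of_forall fun s => stepFun_nonneg he s),
    setIntegral_eq_integral_of_forall_compl_eq_zero hsupp, integral_stepFun htt0 htt,
    nodeMass_last]
  rfl

theorem stepModular_le_of_nodeSubmaj (hI : OLDomain I) (hφ : ∀ t, 0 ≤ t → 0 ≤ φ t)
    (hw : IsWeight I w) (htt0 : tt 0 = 0) (htt : StrictMono tt) (httI : tt (Fin.last n) ∈ I)
    {a b c : Fin n → ℝ} (ha : Antitone a) (hapos : ∀ i, 0 < a i) (hbpos : ∀ i, 0 < b i)
    (hmin : (∫⁻ t in I, phiRatio φ (stepFun n tt a t) (stepFun n tt b t))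
        = Pmod I φ w (stepFun n tt a))
    (hc : Antitone c) (hcpos : ∀ i, 0 < c i) (hnode : NodeSubmaj n tt w c) :
    stepModular φ n tt a b ≤ stepModular φ n tt a c := by
  have ha0 i := (hapos i).le
  have hPc : Pmod I φ w (stepFun n tt a) ≤ ENNReal.ofReal (stepModular φ n tt a c) := by
    refine sInf_le ⟨stepFun n tt c, measurable_stepFun c,
      (submaj_stepFun_iff_nodeSubmaj hI hw htt0 htt httI hc hcpos).2 hnode, ?_⟩
    rw [← lintegral_phiRatio_stepFun hI hφ htt0 htt httI ha0 hcpos]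
    refine setLIntegral_congr_fun hI.measurableSet fun t ht => ?_
    rw [decRearr_stepFun hI htt0 htt httI ha hapos ht,
      abs_of_nonneg (stepFun_nonneg (fun i => (hcpos i).le) t)]
  rw [← hmin, lintegral_phiRatio_stepFun hI hφ htt0 htt httI ha0 hbpos] at hPc
  exact (ENNReal.ofReal_le_ofReal_iff
    (stepModular_nonneg hφ htt.monotone ha0 hcpos)).1 hPc

end Modular

section Perspective

variable {φ : ℝ → ℝ}

theorem apply_div_mul_lt (hsc : StrictConvexOn ℝ (Ici 0) φ) (hφ0 : φ 0 = 0) {A x y : ℝ}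
    (hA : 0 < A) (hx : 0 < x) (hxy : x < y) : φ (A / y) * y < φ (A / x) * x := by
  have hy := hx.trans hxy
  have h := hsc.secant_strict_mono (a := 0) (mem_Ici.2 le_rfl) (div_pos hA hy).le (div_pos hA hx).le
    (div_pos hA hy).ne' (div_pos hA hx).ne' (div_lt_div_of_pos_left hA hx hxy)
  simp only [hφ0, sub_zero, div_div_eq_mul_div] at h
  exact (div_lt_div_iff_of_pos_right hA).1 h

theorem apply_div_mul_le (hφ : ConvexOn ℝ (Ici 0) φ) {A x y θ : ℝ} (hA : 0 ≤ A)
    (hx : 0 < x) (hy : 0 < y) (hθ₀ : 0 ≤ θ) (hθ₁ : θ ≤ 1) :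
    φ (A / ((1 - θ) * x + θ * y)) * ((1 - θ) * x + θ * y)
      ≤ (1 - θ) * (φ (A / x) * x) + θ * (φ (A / y) * y) := by
  set z := (1 - θ) * x + θ * y
  have hz : 0 < z := by
    rcases hθ₁.lt_or_eq with h | rfl
    · positivity
    · simpa [z] using hy
  have h := hφ.2 (div_nonneg hA hx.le) (div_nonneg hA hy.le)
    (div_nonneg (mul_nonneg (sub_nonneg.2 hθ₁) hx.le) hz.le)
    (div_nonneg (mul_nonneg hθ₀ hy.le) hz.le) (by rw [← add_div, div_self hz.ne'])
  have harg : (1 - θ) * x / z * (A / x) + θ * y / z * (A / y) = A / z := by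
    field_simp
    ring
  rw [smul_eq_mul, smul_eq_mul, harg, smul_eq_mul, smul_eq_mul] at h
  calc φ (A / z) * z ≤ ((1 - θ) * x / z * φ (A / x) + θ * y / z * φ (A / y)) * z :=
        mul_le_mul_of_nonneg_right h hz.le
    _ = (1 - θ) * (φ (A / x) * x) + θ * (φ (A / y) * y) := by field_simp

theorem mul_apply_div_sum_lt (hsc : StrictConvexOn ℝ (Ici 0) φ) {ι : Type*} {s : Finset ι}
    {α β : ι → ℝ} (hα : ∀ i ∈ s, 0 ≤ α i) (hβ : ∀ i ∈ s, 0 < β i)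
    (hne : ∃ i ∈ s, ∃ j ∈ s, α i / β i ≠ α j / β j) :
    (∑ i ∈ s, β i) * φ ((∑ i ∈ s, α i) / ∑ i ∈ s, β i)
      < ∑ i ∈ s, β i * φ (α i / β i) := by
  obtain ⟨i₀, hi₀, -⟩ := id hne
  set B := ∑ i ∈ s, β i
  have hB : 0 < B := Finset.sum_pos hβ ⟨i₀, hi₀⟩
  have hmean : ∑ i ∈ s, (β i / B) • (α i / β i) = (∑ i ∈ s, α i) / B := by
    rw [Finset.sum_div]
    exact Finset.sum_congr rfl fun i hi => by
      rw [smul_eq_mul]; field_simp [(hβ i hi).ne']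
  have h := hsc.map_sum_lt (fun i hi => div_pos (hβ i hi) hB)
    (by rw [← Finset.sum_div, div_self hB.ne']) (fun i hi => div_nonneg (hα i hi) (hβ i hi).le)
    hne
  rw [hmean] at h
  calc B * φ ((∑ i ∈ s, α i) / B) < B * ∑ i ∈ s, (β i / B) • φ (α i / β i) :=
        mul_lt_mul_of_pos_left h hB
    _ = ∑ i ∈ s, β i * φ (α i / β i) := by
        rw [Finset.mul_sum]
        exact Finset.sum_congr rfl fun i _ => by rw [smul_eq_mul]; field_simp

end Perspective

section Optimality

variable {I : Set ℝ} {φ w : ℝ → ℝ} {n : ℕ} {tt : Fin (n+1) → ℝ}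

theorem stepModular_add_mul_sub_le (hφ : ConvexOn ℝ (Ici 0) φ) (htt : Monotone tt)
    {a b c : Fin n → ℝ} (ha : ∀ i, 0 ≤ a i) (hb : ∀ i, 0 < b i) (hc : ∀ i, 0 < c i)
    {θ : ℝ} (hθ₀ : 0 ≤ θ) (hθ₁ : θ ≤ 1) :
    stepModular φ n tt a (fun i => b i + θ * (c i - b i))
      ≤ (1 - θ) * stepModular φ n tt a b + θ * stepModular φ n tt a c := by
  simp only [stepModular, Finset.mul_sum, ← Finset.sum_add_distrib]
  refine Finset.sum_le_sum fun i _ => ?_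
  rw [show b i + θ * (c i - b i) = (1 - θ) * b i + θ * c i by ring]
  calc _ ≤ ((1 - θ) * (φ (a i / b i) * b i) + θ * (φ (a i / c i) * c i))
        * (tt i.succ - tt i.castSucc) :=
        mul_le_mul_of_nonneg_right (apply_div_mul_le hφ (ha i) (hb i) (hc i) hθ₀ hθ₁)
          (sub_nonneg.2 (htt (Fin.castSucc_le_succ i)))
    _ = _ := by ring

theorem eventually_add_mul_nonpos {u v : ℝ} (h : u < 0 ∨ u ≤ 0 ∧ v ≤ 0) :
    ∀ᶠ θ in 𝓝[>] 0, u + θ * v ≤ 0 := by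
  rcases h with h | ⟨hu, hv⟩
  · have hlim : Tendsto (fun θ => u + θ * v) (𝓝[>] 0) (𝓝 u) := by
      simpa using ((continuous_const.add (continuous_id.mul continuous_const)).tendsto
        (0 : ℝ) (f := fun θ : ℝ => u + θ * v)).mono_left nhdsWithin_le_nhds
    exact (hlim.eventually_lt_const h).mono fun _ h => h.le
  · exact eventually_nhdsWithin_of_forall fun θ hθ =>
      add_nonpos hu (mul_nonpos_of_nonneg_of_nonpos (le_of_lt hθ) hv)

theorem stepModular_le_of_admissible_direction (hI : OLDomain I) (hφ : OrliczOn φ)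
    (hw : IsWeight I w) (htt0 : tt 0 = 0) (htt : StrictMono tt) (httI : tt (Fin.last n) ∈ I)
    {a b c : Fin n → ℝ} (ha : Antitone a) (hapos : ∀ i, 0 < a i) (hb : Antitone b)
    (hbpos : ∀ i, 0 < b i) (hbnode : NodeSubmaj n tt w b)
    (hmin : (∫⁻ t in I, phiRatio φ (stepFun n tt a t) (stepFun n tt b t))
        = Pmod I φ w (stepFun n tt a))
    (hcpos : ∀ i, 0 < c i) (hflat : ∀ i j, i ≤ j → b j = b i → c j - b j ≤ c i - b i)
    (hslack : ∀ k, nodeMass n tt b k < nodeMass n tt c k →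
      nodeMass n tt b k < ∫ s in Ioo 0 (tt k), w s) :
    stepModular φ n tt a b ≤ stepModular φ n tt a c := by
  set cθ : ℝ → Fin n → ℝ := fun θ i => b i + θ * (c i - b i)
  have hanti : ∀ᶠ θ in 𝓝[>] 0, ∀ i j, i ≤ j → cθ θ j ≤ cθ θ i := by
    refine eventually_all.2 fun i => eventually_all.2 fun j => ?_
    by_cases hij : i ≤ j
    · have h : b j - b i < 0 ∨ b j - b i ≤ 0 ∧ (c j - b j) - (c i - b i) ≤ 0 := by
        rcases (hb hij).lt_or_eq with h | h
        · exact Or.inl (sub_neg.2 h)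
        · exact Or.inr ⟨sub_nonpos.2 h.le, sub_nonpos.2 (hflat i j hij h)⟩
      exact (eventually_add_mul_nonpos h).mono fun θ hθ _ => by simp only [cθ]; linarith
    · exact Eventually.of_forall fun _ h => absurd h hij
  have hnode : ∀ᶠ θ in 𝓝[>] 0, NodeSubmaj n tt w (cθ θ) := by
    refine eventually_all.2 fun k => ?_
    have h : nodeMass n tt b k - ∫ s in Ioo 0 (tt k), w s < 0 ∨
        nodeMass n tt b k - ∫ s in Ioo 0 (tt k), w s ≤ 0 ∧
          nodeMass n tt c k - nodeMass n tt b k ≤ 0 := by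
      rcases lt_or_ge (nodeMass n tt b k) (nodeMass n tt c k) with h | h
      · exact Or.inl (sub_neg.2 (hslack k h))
      · exact Or.inr ⟨sub_nonpos.2 (hbnode k), sub_nonpos.2 h⟩
    exact (eventually_add_mul_nonpos h).mono fun θ hθ => by
      rw [nodeMass_add_mul_sub]; linarith
  obtain ⟨θ, ⟨hθanti, hθnode⟩, hθ₀, hθ₁⟩ :=
    ((hanti.and hnode).and (Ioo_mem_nhdsGT one_pos)).exists
  have hθpos i : 0 < cθ θ i := by
    rw [show cθ θ i = (1 - θ) * b i + θ * c i by simp only [cθ]; ring]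
    exact add_pos_of_nonneg_of_pos (mul_nonneg (sub_nonneg.2 hθ₁.le) (hbpos i).le)
      (mul_pos hθ₀ (hcpos i))
  have hle := stepModular_le_of_nodeSubmaj hI hφ.2.2.2 hw htt0 htt httI ha hapos hbpos hmin
    (fun i j hij => hθanti i j hij) hθpos hθnode
  have hconv := stepModular_add_mul_sub_le (a := a) hφ.2.1 htt.monotone (fun i => (hapos i).le)
    hbpos hcpos hθ₀.le hθ₁.le
  exact le_of_mul_le_mul_left (by linarith) hθ₀

end Optimality

section Tight

variable {I : Set ℝ} {φ w : ℝ → ℝ} {n : ℕ} {tt : Fin (n+1) → ℝ}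

/-- Where `b` is constant, `nodeMass` is affine while `∫₀ᵗ w` is concave, so their difference
is concave along the stretch: being nonnegative, it cannot vanish inside without vanishing at
the ends. -/
theorem tight_of_flat (hI : OLDomain I) (hw : IsWeight I w) (htt0 : tt 0 = 0)
    (htt : StrictMono tt) (httI : tt (Fin.last n) ∈ I) {b : Fin n → ℝ} (hb : Antitone b)
    (hnode : NodeSubmaj n tt w b) {i j : Fin n} (hij : b i = b j) {k₁ k k₂ : Fin (n+1)}
    (h₁ : i.castSucc ≤ k₁) (hk₁ : k₁ < k) (hk₂ : k < k₂) (h₂ : k₂ ≤ j.succ)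
    (hk : nodeMass n tt b k = ∫ s in Ioo 0 (tt k), w s) :
    nodeMass n tt b k₁ = ∫ s in Ioo 0 (tt k₁), w s ∧
      nodeMass n tt b k₂ = ∫ s in Ioo 0 (tt k₂), w s := by
  have hflat (l : Fin n) (hl₁ : k₁ ≤ l.castSucc) (hl₂ : l.castSucc < k₂) : b l = b i :=
    le_antisymm (hb (Fin.castSucc_le_castSucc_iff.1 (h₁.trans hl₁)))
      (hij ▸ hb (Fin.castSucc_lt_succ_iff.1 (hl₂.trans_le h₂)))
  have e₁ := nodeMass_of_flat (tt := tt) hk₁.le fun l h h' => hflat l h (h'.trans hk₂)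
  have e₂ := nodeMass_of_flat (tt := tt) hk₂.le fun l h h' => hflat l (hk₁.le.trans h) h'
  have hl := hw.mul_sub_le_sub hI (htt0 ▸ htt.monotone (Fin.zero_le k₁)) (htt.monotone hk₁.le)
    (node_mem hI htt0 htt httI k)
  have hr := hw.sub_le_mul_sub hI (node_mem hI htt0 htt httI k) (htt.monotone hk₂.le)
    (node_mem hI htt0 htt httI k₂)
  have n₁ := hnode k₁
  have n₂ := hnode k₂
  have hβ₁ : b i ≤ w (tt k) := le_of_mul_le_mul_right (by linarith) (sub_pos.2 (htt hk₂))
  have hβ₂ : w (tt k) ≤ b i := le_of_mul_le_mul_right (by linarith) (sub_pos.2 (htt hk₁))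
  rw [le_antisymm hβ₁ hβ₂] at e₁ e₂
  constructor <;> linarith

theorem nodeMass_last_eq (hI : OLDomain I) (hφ : OrliczOn φ) (hsc : StrictConvexOn ℝ (Ici 0) φ)
    (hw : IsWeight I w) (hn : 0 < n) (htt0 : tt 0 = 0) (htt : StrictMono tt)
    (httI : tt (Fin.last n) ∈ I) {a b : Fin n → ℝ} (ha : Antitone a) (hapos : ∀ i, 0 < a i)
    (hb : Antitone b) (hbpos : ∀ i, 0 < b i) (hbnode : NodeSubmaj n tt w b)
    (hmin : (∫⁻ t in I, phiRatio φ (stepFun n tt a t) (stepFun n tt b t))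
        = Pmod I φ w (stepFun n tt a)) :
    nodeMass n tt b (Fin.last n) = ∫ s in Ioo 0 (tt (Fin.last n)), w s := by
  by_contra hne
  set ℓ : Fin n := ⟨n - 1, by omega⟩
  have hℓ : ℓ.succ = Fin.last n := Fin.ext (by simp [ℓ]; omega)
  set c : Fin n → ℝ := fun i => if b i = b ℓ then b i + 1 else b i
  have hΔ (i : Fin n) : 0 < tt i.succ - tt i.castSucc := sub_pos.2 (htt Fin.castSucc_lt_succ)
  have hlt : stepModular φ n tt a c < stepModular φ n tt a b := by
    refine Finset.sum_lt_sum (fun i _ => ?_) ⟨ℓ, Finset.mem_univ _, ?_⟩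
    · by_cases h : b i = b ℓ
      · simp only [c, if_pos h]
        exact mul_le_mul_of_nonneg_right
          (apply_div_mul_lt hsc hφ.1 (hapos i) (hbpos i) (lt_add_one _)).le (hΔ i).le
      · simp only [c, if_neg h, le_refl]
    · simp only [c, if_pos rfl]
      exact mul_lt_mul_of_pos_right
        (apply_div_mul_lt hsc hφ.1 (hapos ℓ) (hbpos ℓ) (lt_add_one _)) (hΔ ℓ)
  refine hlt.not_ge (stepModular_le_of_admissible_direction hI hφ hw htt0 htt httI ha hapos hb
    hbpos hbnode hmin (fun i => ?_) (fun i j _ hji => by simp only [c, hji, le_refl])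
    fun k hk => ?_)
  · simp only [c]
    split <;> linarith [hbpos i]
  obtain ⟨i, hi, hbi⟩ : ∃ i : Fin n, i.castSucc < k ∧ b i = b ℓ := by
    by_contra! h
    refine hk.ne (Finset.sum_congr rfl fun i hi => ?_).symm
    simp only [c, if_neg (h i (Finset.mem_filter.1 hi).2)]
  refine (hbnode k).lt_of_ne fun htight => hne ?_
  rcases (Fin.le_last k).lt_or_eq with hk' | rfl
  · exact (tight_of_flat hI hw htt0 htt httI hb hbnode hbi le_rfl hi hk' hℓ.ge htight).2
  · exact htight

end Tight

section Block

variable {I : Set ℝ} {φ w : ℝ → ℝ} {n : ℕ} {tt : Fin (n+1) → ℝ}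

def blockRescale (n : ℕ) (tt : Fin (n+1) → ℝ) (a b : Fin n → ℝ) (C : Finset (Fin n))
    (l : Fin n) : ℝ :=
  if l ∈ C then
    (∑ i ∈ C, b i * (tt i.succ - tt i.castSucc)) /
      (∑ i ∈ C, a i * (tt i.succ - tt i.castSucc)) * a l
  else b l

theorem stepModular_blockRescale_lt (hsc : StrictConvexOn ℝ (Ici 0) φ) (htt : StrictMono tt)
    {a b : Fin n → ℝ} (hapos : ∀ i, 0 < a i) (hbpos : ∀ i, 0 < b i) {C : Finset (Fin n)}
    {i j : Fin n} (hi : i ∈ C) (hj : j ∈ C) (hne : b i * a j ≠ b j * a i) :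
    stepModular φ n tt a (blockRescale n tt a b C) < stepModular φ n tt a b := by
  set Δ : Fin n → ℝ := fun l => tt l.succ - tt l.castSucc
  have hΔ l : 0 < Δ l := sub_pos.2 (htt Fin.castSucc_lt_succ)
  set A := ∑ l ∈ C, a l * Δ l
  set B := ∑ l ∈ C, b l * Δ l
  have hA : 0 < A := Finset.sum_pos (fun l _ => mul_pos (hapos l) (hΔ l)) ⟨i, hi⟩
  have hB : 0 < B := Finset.sum_pos (fun l _ => mul_pos (hbpos l) (hΔ l)) ⟨i, hi⟩
  have hratio (l : Fin n) : a l * Δ l / (b l * Δ l) = a l / b l :=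
    mul_div_mul_right _ _ (hΔ l).ne'
  have hJensen := mul_apply_div_sum_lt hsc (s := C) (α := fun l => a l * Δ l)
    (β := fun l => b l * Δ l) (fun l _ => (mul_pos (hapos l) (hΔ l)).le)
    (fun l _ => mul_pos (hbpos l) (hΔ l)) ⟨i, hi, j, hj, by
      simp only [hratio]
      rw [Ne, div_eq_div_iff (hbpos i).ne' (hbpos j).ne']
      exact fun h => hne (by linarith)⟩
  have hC : ∑ l ∈ C, φ (a l / blockRescale n tt a b C l) * blockRescale n tt a b C l * Δ l
      = B * φ (A / B) := by
    have hterm : ∀ l ∈ C,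
        φ (a l / blockRescale n tt a b C l) * blockRescale n tt a b C l * Δ l
        = φ (A / B) * (B / A) * (a l * Δ l) := fun l hl => by
      simp only [blockRescale, if_pos hl]
      rw [show a l / (B / A * a l) = A / B by field_simp [(hapos l).ne']]
      ring
    rw [Finset.sum_congr rfl hterm, ← Finset.mul_sum, mul_assoc, div_mul_cancel₀ B hA.ne',
      mul_comm]
  have hCb : ∑ l ∈ C, φ (a l / b l) * b l * Δ l
      = ∑ l ∈ C, b l * Δ l * φ (a l * Δ l / (b l * Δ l)) :=
    Finset.sum_congr rfl fun l _ => by rw [hratio]; ring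
  have hCc : ∑ l ∈ Cᶜ, φ (a l / blockRescale n tt a b C l) * blockRescale n tt a b C l * Δ l
      = ∑ l ∈ Cᶜ, φ (a l / b l) * b l * Δ l :=
    Finset.sum_congr rfl fun l hl => by simp only [blockRescale, if_neg (Finset.mem_compl.1 hl)]
  simp only [stepModular]
  rw [← Finset.sum_add_sum_compl C, ← Finset.sum_add_sum_compl C (fun l => _ * b l * _), hC,
    hCc, hCb]
  linarith

theorem nodeMass_blockRescale {a b : Fin n → ℝ} {C : Finset (Fin n)}
    (hA : ∑ i ∈ C, a i * (tt i.succ - tt i.castSucc) ≠ 0) {k : Fin (n+1)}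
    (hk : (∀ l ∈ C, l.castSucc < k) ∨ ∀ l ∈ C, k ≤ l.castSucc) :
    nodeMass n tt (blockRescale n tt a b C) k = nodeMass n tt b k := by
  rcases hk with hk | hk
  · rw [← sub_eq_zero, nodeMass, nodeMass, ← Finset.sum_sub_distrib,
      ← Finset.sum_subset (fun l hl => Finset.mem_filter.2 ⟨Finset.mem_univ l, hk l hl⟩)
        fun l _ hl => by simp only [blockRescale, if_neg hl, sub_self],
      Finset.sum_sub_distrib]
    simp only [blockRescale]
    rw [Finset.sum_congr rfl fun l hl => by rw [if_pos hl, mul_assoc], ← Finset.mul_sum,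
      div_mul_cancel₀ _ hA, sub_self]
  · refine Finset.sum_congr rfl fun l hl => ?_
    have hl : l ∉ C := fun h => (hk l h).not_gt (Finset.mem_filter.1 hl).2
    simp only [blockRescale, if_neg hl]

theorem mul_eq_mul_of_tight (hI : OLDomain I) (hφ : OrliczOn φ)
    (hsc : StrictConvexOn ℝ (Ici 0) φ) (hw : IsWeight I w) (htt0 : tt 0 = 0)
    (htt : StrictMono tt) (httI : tt (Fin.last n) ∈ I) {a b : Fin n → ℝ} (ha : Antitone a)
    (hapos : ∀ i, 0 < a i) (hb : Antitone b) (hbpos : ∀ i, 0 < b i)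
    (hbnode : NodeSubmaj n tt w b)
    (hmin : (∫⁻ t in I, phiRatio φ (stepFun n tt a t) (stepFun n tt b t))
        = Pmod I φ w (stepFun n tt a))
    {p q : Fin (n+1)} (hp : nodeMass n tt b p = ∫ s in Ioo 0 (tt p), w s)
    (hq : nodeMass n tt b q = ∫ s in Ioo 0 (tt q), w s)
    (hslack : ∀ k, p < k → k < q → nodeMass n tt b k < ∫ s in Ioo 0 (tt k), w s)
    {i j : Fin n} (hi : p ≤ i.castSucc ∧ i.castSucc < q)
    (hj : p ≤ j.castSucc ∧ j.castSucc < q) :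
    b i * a j = b j * a i := by
  by_contra hne
  obtain ⟨m, hpm, hmq⟩ : ∃ m, p < m ∧ m < q := by
    rcases lt_trichotomy i j with h | rfl | h
    · exact ⟨i.succ, hi.1.trans_lt Fin.castSucc_lt_succ,
        (Fin.succ_le_castSucc_iff.2 h).trans_lt hj.2⟩
    · exact absurd rfl hne
    · exact ⟨j.succ, hj.1.trans_lt Fin.castSucc_lt_succ,
        (Fin.succ_le_castSucc_iff.2 h).trans_lt hi.2⟩
  set C := Finset.univ.filter fun l : Fin n => p ≤ l.castSucc ∧ l.castSucc < q
  have hC {l : Fin n} : l ∈ C ↔ p ≤ l.castSucc ∧ l.castSucc < q := by simp [C]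
  have hΔ (l : Fin n) : 0 < tt l.succ - tt l.castSucc := sub_pos.2 (htt Fin.castSucc_lt_succ)
  have hA : 0 < ∑ l ∈ C, a l * (tt l.succ - tt l.castSucc) :=
    Finset.sum_pos (fun l _ => mul_pos (hapos l) (hΔ l)) ⟨i, hC.2 hi⟩
  have hB : 0 < ∑ l ∈ C, b l * (tt l.succ - tt l.castSucc) :=
    Finset.sum_pos (fun l _ => mul_pos (hbpos l) (hΔ l)) ⟨i, hC.2 hi⟩
  have hr := div_pos hB hA
  refine (stepModular_blockRescale_lt hsc htt hapos hbpos (hC.2 hi) (hC.2 hj) hne).not_ge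
    (stepModular_le_of_admissible_direction hI hφ hw htt0 htt httI ha hapos hb hbpos hbnode hmin
      (fun l => ?_) (fun i' j' hij' hbij => ?_) fun k hk => ?_)
  · simp only [blockRescale]
    split
    exacts [mul_pos hr (hapos l), hbpos l]
  · by_cases hi' : i' ∈ C <;> by_cases hj' : j' ∈ C
    · simp only [blockRescale, if_pos hi', if_pos hj', hbij]
      linarith [mul_le_mul_of_nonneg_left (ha hij') hr.le]
    · have hqj : q ≤ j'.castSucc := not_lt.1 fun h => hj' (hC.2
        ⟨(hC.1 hi').1.trans (Fin.castSucc_le_castSucc_iff.2 hij'), h⟩)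
      have hk₁ : max m i'.castSucc < q := max_lt hmq (hC.1 hi').2
      exact absurd (tight_of_flat hI hw htt0 htt httI hb hbnode hbij.symm (le_max_right _ _)
        hk₁ (hqj.trans_lt Fin.castSucc_lt_succ) le_rfl hq).1
        (hslack _ (hpm.trans_le (le_max_left _ _)) hk₁).ne
    · have hip : i'.castSucc < p := not_le.1 fun h => hi' (hC.2
        ⟨h, (Fin.castSucc_le_castSucc_iff.2 hij').trans_lt (hC.1 hj').2⟩)
      have hk₂ : p < min m j'.succ := lt_min hpm ((hC.1 hj').1.trans_lt Fin.castSucc_lt_succ)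
      exact absurd (tight_of_flat hI hw htt0 htt httI hb hbnode hbij.symm le_rfl hip hk₂
        (min_le_right _ _) hp).2 (hslack _ hk₂ ((min_le_left _ _).trans_lt hmq)).ne
    · simp only [blockRescale, if_neg hi', if_neg hj', sub_self, le_refl]
  · rcases le_or_gt k p with hkp | hpk
    · exact absurd (nodeMass_blockRescale hA.ne' (Or.inr fun l hl => hkp.trans (hC.1 hl).1))
        hk.ne'
    rcases lt_or_ge k q with hkq | hqk
    · exact hslack k hpk hkq
    · exact absurd (nodeMass_blockRescale hA.ne' (Or.inl fun l hl => (hC.1 hl).2.trans_le hqk))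
        hk.ne'

theorem exists_eq_mul_of_tight (hI : OLDomain I) (hφ : OrliczOn φ)
    (hsc : StrictConvexOn ℝ (Ici 0) φ) (hw : IsWeight I w) (htt0 : tt 0 = 0)
    (htt : StrictMono tt) (httI : tt (Fin.last n) ∈ I) {a b : Fin n → ℝ} (ha : Antitone a)
    (hapos : ∀ i, 0 < a i) (hb : Antitone b) (hbpos : ∀ i, 0 < b i)
    (hbnode : NodeSubmaj n tt w b)
    (hmin : (∫⁻ t in I, phiRatio φ (stepFun n tt a t) (stepFun n tt b t))
        = Pmod I φ w (stepFun n tt a))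
    {p q : Fin (n+1)} (hpq : p < q) (hp : nodeMass n tt b p = ∫ s in Ioo 0 (tt p), w s)
    (hq : nodeMass n tt b q = ∫ s in Ioo 0 (tt q), w s)
    (hslack : ∀ k, p < k → k < q → nodeMass n tt b k < ∫ s in Ioo 0 (tt k), w s) :
    ∃ r > 0, ∀ l : Fin n, p ≤ l.castSucc → l.castSucc < q → b l = r * a l := by
  set i₀ := p.castPred (Fin.ne_last_of_lt hpq)
  have hi₀ : p ≤ i₀.castSucc ∧ i₀.castSucc < q := by simp [i₀, hpq]
  refine ⟨b i₀ / a i₀, div_pos (hbpos i₀) (hapos i₀), fun l hl₁ hl₂ => ?_⟩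
  have h := mul_eq_mul_of_tight hI hφ hsc hw htt0 htt httI ha hapos hb hbpos hbnode hmin hp hq
    hslack ⟨hl₁, hl₂⟩ hi₀
  field_simp [(hapos i₀).ne']
  linarith

end Block

theorem exists_strictMono_enum {n : ℕ} (T : Finset (Fin (n+1))) (h0 : 0 ∈ T)
    (hlast : Fin.last n ∈ T) :
    ∃ m ≤ n, ∃ idx : Fin (m+1) → Fin (n+1), StrictMono idx ∧ idx 0 = 0 ∧
      idx (Fin.last m) = Fin.last n ∧ Set.range idx = T := by
  obtain ⟨m, hm⟩ : ∃ m, T.card = m + 1 :=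
    ⟨T.card - 1, by have := Finset.card_pos.2 ⟨0, h0⟩; omega⟩
  refine ⟨m, by have := T.card_le_univ; simp only [Fintype.card_fin] at this; omega,
    T.orderEmbOfFin hm, (T.orderEmbOfFin hm).strictMono, ?_, ?_, T.range_orderEmbOfFin hm⟩
  · rw [show (0 : Fin (m+1)) = ⟨0, m.succ_pos⟩ from rfl, Finset.orderEmbOfFin_zero hm]
    exact le_antisymm (T.min'_le 0 h0) (Fin.zero_le _)
  · rw [show Fin.last m = ⟨m + 1 - 1, by omega⟩ from Fin.ext (by simp),
      Finset.orderEmbOfFin_last hm m.succ_pos]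
    exact le_antisymm (Fin.le_last _) (T.le_max' _ hlast)

theorem stepFun_eq_sum_blocks {n m : ℕ} {tt : Fin (n+1) → ℝ} (htt : StrictMono tt)
    {idx : Fin (m+1) → Fin (n+1)} (hidx : StrictMono idx) (h0 : idx 0 = 0)
    (hlast : idx (Fin.last m) = Fin.last n) {a b : Fin n → ℝ} {r : Fin m → ℝ}
    (hr : ∀ j l, idx j.castSucc ≤ l.castSucc → l.castSucc < idx j.succ → b l = r j * a l)
    (s : ℝ) :
    stepFun n tt b s = ∑ j : Fin m, if tt (idx j.castSucc) ≤ s ∧ s < tt (idx j.succ)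
      then r j * stepFun n tt a s else 0 := by
  have hT : StrictMono (tt ∘ idx) := htt.comp hidx
  have hsum : (∑ j : Fin m, if tt (idx j.castSucc) ≤ s ∧ s < tt (idx j.succ)
      then r j * stepFun n tt a s else 0) = stepFun m (tt ∘ idx) r s * stepFun n tt a s := by
    conv_rhs => rw [stepFun, Finset.sum_mul]
    simp only [Function.comp_apply, ite_mul, zero_mul]
  rw [hsum]
  rcases lt_or_ge s (tt 0) with hs | hs
  · simp [stepFun_eq_zero_of_lt htt.monotone _ hs]
  rcases lt_or_ge s (tt (Fin.last n)) with hs' | hs'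
  · obtain ⟨l, hl₁, hl₂⟩ := exists_mem_cell htt hs hs'
    obtain ⟨j, hj₁, hj₂⟩ :=
      exists_mem_cell hT (by simpa [h0] using hs) (by simpa [hlast] using hs')
    rw [stepFun_apply htt b hl₁ hl₂, stepFun_apply hT r hj₁ hj₂,
      stepFun_apply htt a hl₁ hl₂]
    exact hr j l (Fin.le_castSucc_iff.2 (htt.lt_iff_lt.1 (hj₁.trans_lt hl₂)))
      (htt.lt_iff_lt.1 (hl₁.trans_lt hj₂))
  · simp [stepFun_eq_zero_of_last_le htt.monotone _ hs']

end OrliczLorentz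

open OrliczLorentz in
theorem statement13 (I : Set ℝ) (hI : OLDomain I) (φ w : ℝ → ℝ)
    (hφ : NFun φ) (hsc : StrictConvexOn ℝ (Ici 0) φ) (hw : IsWeight I w)
    (n : ℕ) (hn : 0 < n) (tt : Fin (n+1) → ℝ) (a : Fin n → ℝ)
    (htt0 : tt 0 = 0) (httm : StrictMono tt) (httI : tt (Fin.last n) ∈ I)
    (ha : StrictAnti a) (hapos : ∀ i, 0 < a i)
    (b : Fin n → ℝ) (hb : Antitone b) (hbpos : ∀ i, 0 < b i)
    (hsub : Submaj I w (stepFun n tt b))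
    (hmin : (∫⁻ t in I, phiRatio φ (stepFun n tt a t) (stepFun n tt b t))
        = Pmod I φ w (stepFun n tt a)) :
    ∃ m : ℕ, m ≤ n ∧ ∃ idx : Fin (m+1) → Fin (n+1), StrictMono idx ∧
      idx 0 = 0 ∧ idx (Fin.last m) = Fin.last n ∧
      ∃ lam : Fin m → ℝ, (∀ j, 0 < lam j) ∧
        (∀ s : ℝ, stepFun n tt b s =
          ∑ j : Fin m, if tt (idx j.castSucc) ≤ s ∧ s < tt (idx j.succ)
            then lam j * stepFun n tt a s else 0) ∧
        ∀ j : Fin (m+1), (∫ s in Ioo (0:ℝ) (tt (idx j)), stepFun n tt b s)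
            = ∫ s in Ioo (0:ℝ) (tt (idx j)), w s := by
  have hbnode := (submaj_stepFun_iff_nodeSubmaj hI hw htt0 httm httI hb hbpos).1 hsub
  set T := Finset.univ.filter fun k : Fin (n+1) => nodeMass n tt b k = ∫ s in Ioo 0 (tt k), w s
  have hT {k : Fin (n+1)} : k ∈ T ↔ nodeMass n tt b k = ∫ s in Ioo 0 (tt k), w s := by
    simp [T]
  obtain ⟨m, hmn, idx, hidx, hidx0, hidxlast, hrange⟩ := exists_strictMono_enum T
    (hT.2 (by simp [nodeMass_zero, htt0]))
    (hT.2 (nodeMass_last_eq hI hφ.1 hsc hw hn htt0 httm httI ha.antitone hapos hb hbpos hbnode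
      hmin))
  have htight j : nodeMass n tt b (idx j) = ∫ s in Ioo 0 (tt (idx j)), w s :=
    hT.1 (Finset.mem_coe.1 (hrange ▸ Set.mem_range_self j))
  have hblock (j : Fin m) : ∃ r > 0, ∀ l : Fin n,
      idx j.castSucc ≤ l.castSucc → l.castSucc < idx j.succ → b l = r * a l := by
    refine exists_eq_mul_of_tight hI hφ.1 hsc hw htt0 httm httI ha.antitone hapos hb hbpos hbnode
      hmin (hidx Fin.castSucc_lt_succ) (htight _) (htight _)
      fun k hk₁ hk₂ => (hbnode k).lt_of_ne fun hk => ?_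
    obtain ⟨j', rfl⟩ : k ∈ Set.range idx := hrange ▸ hT.2 hk
    exact (Fin.castSucc_lt_iff_succ_le.1 (hidx.lt_iff_lt.1 hk₁)).not_gt (hidx.lt_iff_lt.1 hk₂)
  choose r hrpos hr using hblock
  refine ⟨m, hmn, idx, hidx, hidx0, hidxlast, r, hrpos,
    stepFun_eq_sum_blocks httm hidx hidx0 hidxlast hr, fun j => ?_⟩
  rw [setIntegral_stepFun htt0 httm]
  exact htight j
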